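/- Let V be a Banach space densely and continuously embedded in a Banach space E and let {A(t)}_{t≥0} satisfy the hyperbolic conditions (Hyp1)–(Hyp3) with constants M, ω, M_V, ω_V; let {R(t,s)}_{t≥s≥0} be the evolution system determined by {A(t)}_{t≥0} (the unique evolution system satisfying ‖R(t,s)‖ ≤ M e^{ω(t−s)}, ∂⁺/∂t R(t,s)v|_{t=s} = A(s)v and ∂/∂s R(t,s)v = −R(t,s)A(s)v for v∈V). Let {Ŝ(t)}_{t≥0} be a C₀ semigroup on E with generator Â such that V ⊂ D(Â), V is Â-admissible, and ‖Ŝ(τ)‖ ≤ M̂ e^{ω̂ τ} for all τ≥0. Then for every v̄∈V and all 0≤s≤t: ‖Ŝ(t−s)v̄ − R(t,s)v̄‖ ≤ M̂ M_V e^{(|ω̂|+|ω_V|)t} ‖v̄‖_V ∫_s^t ‖A(r) − Â‖_{L(V,E)} dr. -/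

import Mathlib

open MeasureTheory Filter Set Topology

/-- An evolution system on a Banach space `E`. -/
def IsEvolutionSystem {E : Type*} [NormedAddCommGroup E] [NormedSpace ℝ E]
    (R : ℝ → ℝ → E →L[ℝ] E) : Prop :=
  (∀ t : ℝ, 0 ≤ t → R t t = ContinuousLinearMap.id ℝ E) ∧
  (∀ t s r : ℝ, 0 ≤ r → r ≤ s → s ≤ t → (R t s).comp (R s r) = R t r) ∧
  (∀ u : E, ContinuousOn (fun p : ℝ × ℝ => R p.1 p.2 u) {p : ℝ × ℝ | 0 ≤ p.2 ∧ p.2 ≤ p.1})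

/-- A `C₀` semigroup of bounded linear operators on `E`. -/
def IsC0Semigroup {E : Type*} [NormedAddCommGroup E] [NormedSpace ℝ E]
    (S : ℝ → E →L[ℝ] E) : Prop :=
  S 0 = ContinuousLinearMap.id ℝ E ∧
  (∀ t s : ℝ, 0 ≤ t → 0 ≤ s → S (t + s) = (S t).comp (S s)) ∧
  (∀ u : E, ContinuousOn (fun t : ℝ => S t u) (Set.Ici 0))

/-- The composition `S(t_{n-1})(s_{n-1}) ∘ ⋯ ∘ S(t_0)(s_0)` of members of a two-parameter
family of operators. -/
def prodOps {E : Type*} [NormedAddCommGroup E] [NormedSpace ℝ E]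
    (S : ℝ → ℝ → E →L[ℝ] E) (t s : ℕ → ℝ) : ℕ → E →L[ℝ] E
  | 0 => ContinuousLinearMap.id ℝ E
  | n + 1 => (S (t n) (s n)).comp (prodOps S t s n)

/-- Stability of a family `{S(t)}_{t ≥ 0}` of semigroups with constants `M`, `ω`:
`‖S(tₙ)(sₙ) ⋯ S(t₁)(s₁)‖ ≤ M e^{ω(s₁+⋯+sₙ)}` for `0 ≤ t₁ ≤ ⋯ ≤ tₙ` and `sᵢ ≥ 0`. -/
def IsStableFamily {E : Type*} [NormedAddCommGroup E] [NormedSpace ℝ E]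
    (S : ℝ → ℝ → E →L[ℝ] E) (M ω : ℝ) : Prop :=
  ∀ (n : ℕ) (t s : ℕ → ℝ), (∀ i, 0 ≤ t i) → (∀ i j, i ≤ j → t i ≤ t j) → (∀ i, 0 ≤ s i) →
    ‖prodOps S t s n‖ ≤ M * Real.exp (ω * ∑ i ∈ Finset.range n, s i)

/-- The hyperbolic (Kato) conditions (Hyp1)–(Hyp3) for a family `{A(t)}_{t≥0}` of generators,
relative to a continuous dense embedding `ι : V → E`. Here `S t` is the `C₀` semigroup on `E`
generated by `A(t)`, `SV t` is its restriction to `V` (admissibility), and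
`A t : V →L[ℝ] E` is the restriction of `A(t)` to `V` (so that `V ⊆ D(A(t))`). -/
structure IsHyperbolicFamily {V E : Type*}
    [NormedAddCommGroup V] [NormedSpace ℝ V]
    [NormedAddCommGroup E] [NormedSpace ℝ E]
    (iota : V →L[ℝ] E) (A : ℝ → (V →L[ℝ] E))
    (S : ℝ → ℝ → E →L[ℝ] E) (SV : ℝ → ℝ → V →L[ℝ] V)
    (M om MV omV : ℝ) : Prop where
  /-- (Hyp1): each `S t` is a `C₀` semigroup on `E`. -/
  sem_E : ∀ t : ℝ, 0 ≤ t → IsC0Semigroup (S t)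
  /-- (Hyp1)/(Hyp3): `A(t)v` is the generator of `S t` applied to `v ∈ V`. -/
  gen_on_V : ∀ t : ℝ, 0 ≤ t → ∀ v : V,
    Filter.Tendsto (fun h : ℝ => h⁻¹ • (S t h (iota v) - iota v)) (nhdsWithin 0 (Set.Ioi 0))
      (nhds (A t v))
  /-- (Hyp1): stability on `E` with constants `M`, `ω`. -/
  stable_E : IsStableFamily S M om
  /-- (Hyp2): each restricted semigroup `SV t` is a `C₀` semigroup on `V`. -/
  sem_V : ∀ t : ℝ, 0 ≤ t → IsC0Semigroup (SV t)
  /-- (Hyp2): `V` is `A(t)`-admissible, `SV t` being the restriction of `S t` to `V`. -/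
  compat : ∀ t h : ℝ, 0 ≤ t → 0 ≤ h → ∀ v : V, iota (SV t h v) = S t h (iota v)
  /-- (Hyp2): stability on `V` with constants `M_V`, `ω_V`. -/
  stable_V : IsStableFamily SV MV omV
  /-- (Hyp3): `t ↦ A(t) ∈ L(V,E)` is norm continuous on `[0,∞)`. -/
  contA : ContinuousOn A (Set.Ici 0)

/-- `R` is the evolution system determined by the hyperbolic family `{A(t)}` (with
restriction data `ι`, constants `M`, `ω`): an evolution system satisfying the exponential
bound, the forward derivative identity at `t = s` and the backward derivative identity
on `V`. -/
def IsDeterminedEvolutionSystem {V E : Type*}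
    [NormedAddCommGroup V] [NormedSpace ℝ V]
    [NormedAddCommGroup E] [NormedSpace ℝ E]
    (iota : V →L[ℝ] E) (A : ℝ → (V →L[ℝ] E)) (M om : ℝ)
    (R : ℝ → ℝ → E →L[ℝ] E) : Prop :=
  IsEvolutionSystem R ∧
  (∀ t s : ℝ, 0 ≤ s → s ≤ t → ‖R t s‖ ≤ M * Real.exp (om * (t - s))) ∧
  (∀ s : ℝ, 0 ≤ s → ∀ v : V,
    Filter.Tendsto (fun h : ℝ => h⁻¹ • (R (s + h) s (iota v) - iota v))
      (nhdsWithin 0 (Set.Ioi 0)) (nhds (A s v))) ∧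
  (∀ t : ℝ, ∀ v : V, ∀ s ∈ Set.Icc (0:ℝ) t,
    HasDerivWithinAt (fun σ : ℝ => R t σ (iota v)) (-(R t s (A s v))) (Set.Icc 0 t) s)

/-!
Partition `[s, t]` by nodes `r₀ ≤ ⋯ ≤ rₙ` and let `wᵢ = S(rᵢ₋₁)(rᵢ - rᵢ₋₁) ⋯ S(r₀)(r₁ - r₀) v` be
the product of the semigroups frozen at the nodes; stability on `V` gives
`‖S(rᵢ)(τ) wᵢ‖_V ≤ M_V e^{|ω_V| t} ‖v‖_V`. On a cell, `τ ↦ Ŝ(t - rᵢ - τ) S(rᵢ)(τ) wᵢ` has derivative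
`Ŝ(t - rᵢ - τ) (A(rᵢ) - Â) S(rᵢ)(τ) wᵢ`, so telescoping bounds `‖Ŝ(t - s) v - wₙ‖` by
`M̂ M_V e^{(|ω̂|+|ω_V|) t} ‖v‖_V` times a Riemann sum of `∫ ‖A(r) - Â‖ dr`. Differentiating
`τ ↦ R(rᵢ₊₁, rᵢ + τ) S(rᵢ)(τ) wᵢ` instead bounds `‖wₙ - R(t, s) v‖` by a constant times the
oscillation of `A` on the cells, which vanishes as the mesh goes to zero.
-/

theorem le_of_forall_pos_le_add_mul {a b c : ℝ} (h : ∀ ε > 0, a ≤ b + c * ε) : a ≤ b := by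
  have hlim : Tendsto (fun ε => b + c * ε) (𝓝 0) (𝓝 (b + c * 0)) :=
    tendsto_const_nhds.add (tendsto_const_nhds.mul tendsto_id)
  rw [mul_zero, add_zero] at hlim
  exact ge_of_tendsto (hlim.mono_left (nhdsWithin_le_nhds (s := Ioi 0)))
    (eventually_mem_nhdsWithin.mono h)

theorem mul_exp_le_mul_exp_abs_mul {K κ τ T : ℝ} (hK : 0 ≤ K) (hτ : 0 ≤ τ) (hτT : τ ≤ T) :
    K * Real.exp (κ * τ) ≤ K * Real.exp (|κ| * T) := by
  have : κ * τ ≤ |κ| * T := by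
    nlinarith [mul_le_mul_of_nonneg_right (le_abs_self κ) hτ, abs_nonneg κ]
  gcongr

theorem exists_partition_norm_sub_le {F : Type*} [SeminormedAddCommGroup F] {f : ℝ → F}
    {s t : ℝ} (hst : s ≤ t) (hf : ContinuousOn f (Icc s t)) {ε : ℝ} (hε : 0 < ε) :
    ∃ (n : ℕ) (r : ℕ → ℝ), Monotone r ∧ r 0 = s ∧ r n = t ∧
      ∀ i < n, ∀ ρ ∈ Icc (r i) (r (i + 1)), ‖f (r i) - f ρ‖ ≤ ε := by
  obtain ⟨δ, hδ, hf⟩ := Metric.uniformContinuousOn_iff.1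
    (isCompact_Icc.uniformContinuousOn_of_continuous hf) ε hε
  obtain ⟨n, hn⟩ := exists_nat_gt ((t - s) / δ)
  have hn0 : (0 : ℝ) < n := (div_nonneg (sub_nonneg.2 hst) hδ.le).trans_lt hn
  set Δ := (t - s) / n
  have hnΔ : n * Δ = t - s := mul_div_cancel₀ _ hn0.ne'
  have hΔ : 0 ≤ Δ := div_nonneg (sub_nonneg.2 hst) hn0.le
  have hΔδ : Δ < δ := by
    rw [div_lt_iff₀ hn0]; rw [div_lt_iff₀ hδ] at hn; linarith
  refine ⟨n, fun i => s + i * Δ, fun i j hij => by dsimp only; gcongr, by simp, by simp [hnΔ],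
    fun i hi ρ hρ => ?_⟩
  have hcast : (i : ℝ) + 1 ≤ n := by exact_mod_cast hi
  have hiΔ : 0 ≤ i * Δ := by positivity
  have hsucc : ((i : ℝ) + 1) * Δ ≤ n * Δ := by gcongr
  push_cast at hρ
  have hdist : dist (s + i * Δ) ρ < δ := by
    rw [Real.dist_eq, abs_sub_comm, abs_of_nonneg (by linarith [hρ.1])]
    linarith [hρ.2]
  simpa [dist_eq_norm] using (hf _ ⟨by linarith, by linarith⟩ ρ
    ⟨by linarith [hρ.1], by linarith [hρ.2]⟩ hdist).le

theorem sum_mul_sub_le_integral_add {g : ℝ → ℝ} {r : ℕ → ℝ} {n : ℕ} {ε : ℝ} (hmono : Monotone r)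
    (hg : IntervalIntegrable g volume (r 0) (r n))
    (hε : ∀ i < n, ∀ ρ ∈ Icc (r i) (r (i + 1)), g (r i) ≤ g ρ + ε) :
    ∑ i ∈ Finset.range n, g (r i) * (r (i + 1) - r i) ≤
      (∫ ρ in r 0..r n, g ρ) + ε * (r n - r 0) := by
  have hint : ∀ i < n, IntervalIntegrable (fun ρ => g ρ + ε) volume (r i) (r (i + 1)) :=
    fun i hi => (hg.mono_set (uIcc_subset_uIcc
      (mem_uIcc_of_le (hmono (Nat.zero_le i)) (hmono hi.le))
      (mem_uIcc_of_le (hmono (Nat.zero_le _)) (hmono hi)))).add intervalIntegrable_const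
  calc ∑ i ∈ Finset.range n, g (r i) * (r (i + 1) - r i)
      ≤ ∑ i ∈ Finset.range n, ∫ ρ in r i..r (i + 1), (g ρ + ε) := by
        refine Finset.sum_le_sum fun i hi => ?_
        have hi := Finset.mem_range.1 hi
        rw [mul_comm, ← smul_eq_mul, ← intervalIntegral.integral_const]
        exact intervalIntegral.integral_mono_on (hmono i.le_succ) intervalIntegrable_const
          (hint i hi) (hε i hi)
    _ = (∫ ρ in r 0..r n, g ρ) + ε * (r n - r 0) := by
        rw [intervalIntegral.sum_integral_adjacent_intervals hint,
          intervalIntegral.integral_add hg intervalIntegrable_const,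
          intervalIntegral.integral_const, smul_eq_mul, mul_comm]

section OperatorFamilies

variable {E F : Type*} [NormedAddCommGroup E] [NormedSpace ℝ E]
  [NormedAddCommGroup F] [NormedSpace ℝ F]

theorem tendsto_apply_of_norm_le {α : Type*} {l : Filter α} {Φ : α → E →L[ℝ] F} {g : α → E}
    {x : E} {y : F} {K : ℝ} (hbd : ∀ᶠ a in l, ‖Φ a‖ ≤ K)
    (hΦ : Tendsto (fun a => Φ a x) l (𝓝 y)) (hg : Tendsto g l (𝓝 x)) :
    Tendsto (fun a => Φ a (g a)) l (𝓝 y) := by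
  have hsmall : Tendsto (fun a => Φ a (g a - x)) l (𝓝 0) := by
    refine squeeze_zero_norm' ?_ (by simpa using ((hg.sub_const x).norm.const_mul K))
    filter_upwards [hbd] with a ha
    exact (Φ a).le_of_opNorm_le ha _
  simpa using hΦ.add hsmall

/-- Product rule for `σ ↦ Φ σ (x σ)` when `Φ` is only strongly differentiable: a uniform bound
and strong continuity of `Φ` stand in for differentiability in operator norm. -/
theorem HasDerivWithinAt.clm_apply_of_norm_le {Φ : ℝ → E →L[ℝ] F} {x : ℝ → E} {s : Set ℝ}
    {σ K : ℝ} {Φ' : F} {x' : E} (hΦ : HasDerivWithinAt (fun σ' => Φ σ' (x σ)) Φ' s σ)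
    (hx : HasDerivWithinAt x x' s σ) (hbd : ∀ σ' ∈ s, ‖Φ σ'‖ ≤ K)
    (hcont : ContinuousWithinAt (fun σ' => Φ σ' x') s σ) :
    HasDerivWithinAt (fun σ' => Φ σ' (x σ')) (Φ' + Φ σ x') s σ := by
  rw [hasDerivWithinAt_iff_tendsto_slope] at hΦ hx ⊢
  have hslope : ∀ σ' ∈ s \ {σ}, slope (fun τ => Φ τ (x σ)) σ σ' + Φ σ' (slope x σ σ') =
      slope (fun τ => Φ τ (x τ)) σ σ' := by
    intro σ' _
    simp only [slope_def_module, map_sub, map_smul, smul_sub]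
    abel
  refine Tendsto.congr' (eventuallyEq_of_mem self_mem_nhdsWithin hslope) (hΦ.add ?_)
  exact tendsto_apply_of_norm_le (eventually_mem_nhdsWithin.mono fun σ' h => hbd σ' h.1)
    (hcont.mono_left (nhdsWithin_mono σ sdiff_subset)) hx

end OperatorFamilies

section Stability

variable {E : Type*} [NormedAddCommGroup E] [NormedSpace ℝ E]

theorem prodOps_congr (S : ℝ → ℝ → E →L[ℝ] E) (t : ℕ → ℝ) {s s' : ℕ → ℝ} :
    ∀ {n : ℕ}, (∀ j < n, s j = s' j) → prodOps S t s n = prodOps S t s' n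
  | 0, _ => rfl
  | n + 1, h => by
    rw [prodOps, prodOps, h n n.lt_succ_self,
      prodOps_congr S t fun j hj => h j (hj.trans n.lt_succ_self)]

variable {S : ℝ → ℝ → E →L[ℝ] E} {M ω : ℝ}

theorem IsStableFamily.nonneg (h : IsStableFamily S M ω) : 0 ≤ M := by
  simpa [prodOps] using (norm_nonneg _).trans
    (h 0 (fun _ => 0) (fun _ => 0) (fun _ => le_rfl) (fun _ _ _ => le_rfl) (fun _ => le_rfl))

theorem IsStableFamily.norm_le (h : IsStableFamily S M ω) {a τ : ℝ} (ha : 0 ≤ a) (hτ : 0 ≤ τ) :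
    ‖S a τ‖ ≤ M * Real.exp (ω * τ) := by
  simpa [prodOps] using
    h 1 (fun _ => a) (fun _ => τ) (fun _ => ha) (fun _ _ _ => le_rfl) (fun _ => hτ)

theorem IsStableFamily.norm_comp_prodOps_le (h : IsStableFamily S M ω) {t s : ℕ → ℝ}
    (ht : ∀ i, 0 ≤ t i) (hmono : Monotone t) (hs : ∀ i, 0 ≤ s i) (n : ℕ) {τ : ℝ} (hτ : 0 ≤ τ) :
    ‖(S (t n) τ).comp (prodOps S t s n)‖ ≤
      M * Real.exp (ω * (∑ i ∈ Finset.range n, s i + τ)) := by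
  set s' := Function.update s n τ
  have hs' : ∀ j < n, s' j = s j := fun j hj => Function.update_of_ne hj.ne _ _
  have hs'n : s' n = τ := Function.update_self _ _ _
  have hprod : prodOps S t s' (n + 1) = (S (t n) τ).comp (prodOps S t s n) := by
    rw [prodOps, prodOps_congr S t hs', hs'n]
  have hsum : ∑ i ∈ Finset.range (n + 1), s' i = ∑ i ∈ Finset.range n, s i + τ := by
    rw [Finset.sum_range_succ, Finset.sum_congr rfl fun j hj => hs' j (Finset.mem_range.1 hj), hs'n]
  have hs'0 : ∀ i, 0 ≤ s' i := fun i => by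
    rcases eq_or_ne i n with rfl | hi
    · exact hs'n ▸ hτ
    · simpa only [s', Function.update_of_ne hi] using hs i
  simpa [hprod, hsum] using h (n + 1) t s' ht (fun _ _ hij => hmono hij) hs'0

end Stability

namespace IsC0Semigroup

variable {E : Type*} [NormedAddCommGroup E] [NormedSpace ℝ E] {S : ℝ → E →L[ℝ] E}

theorem apply_add (hS : IsC0Semigroup S) {a b : ℝ} (ha : 0 ≤ a) (hb : 0 ≤ b) (x : E) :
    S (a + b) x = S a (S b x) := by
  rw [hS.2.1 a b ha hb]; rfl

theorem apply_comm (hS : IsC0Semigroup S) {a b : ℝ} (ha : 0 ≤ a) (hb : 0 ≤ b) (x : E) :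
    S a (S b x) = S b (S a x) := by
  rw [← hS.apply_add ha hb, add_comm, hS.apply_add hb ha]

variable {x y : E} {θ : ℝ}

theorem hasDerivWithinAt_Ioi (hS : IsC0Semigroup S)
    (hxy : Tendsto (fun h : ℝ => h⁻¹ • (S h x - x)) (𝓝[>] 0) (𝓝 y)) (hθ : 0 ≤ θ) :
    HasDerivWithinAt (fun τ => S τ x) (S θ y) (Ioi θ) θ := by
  rw [hasDerivWithinAt_iff_tendsto_slope' self_notMem_Ioi]
  have hshift : Tendsto (fun u => u - θ) (𝓝[>] θ) (𝓝[>] 0) := by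
    refine tendsto_nhdsWithin_iff.2
      ⟨?_, eventually_mem_nhdsWithin.mono fun u hu => mem_Ioi.2 (sub_pos.2 hu)⟩
    simpa using (tendsto_id.sub_const θ).mono_left (nhdsWithin_le_nhds (s := Ioi θ) (a := θ))
  refine (((S θ).continuous.tendsto y).comp (hxy.comp hshift)).congr' ?_
  filter_upwards [self_mem_nhdsWithin] with u hu
  have hu' : S u x = S θ (S (u - θ) x) := by
    rw [← hS.apply_add hθ (sub_pos.2 hu).le, add_sub_cancel]
  simp only [Function.comp_def, slope_def_module, hu', map_smul, map_sub]

theorem hasDerivWithinAt_Icc (hS : IsC0Semigroup S) {K : ℝ} (hbd : ∀ τ ∈ Icc 0 θ, ‖S τ‖ ≤ K)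
    (hxy : Tendsto (fun h : ℝ => h⁻¹ • (S h x - x)) (𝓝[>] 0) (𝓝 y)) (hθ : 0 ≤ θ) :
    HasDerivWithinAt (fun τ => S τ x) (S θ y) (Icc 0 θ) θ := by
  rw [hasDerivWithinAt_iff_tendsto_slope]
  have hshift : Tendsto (fun u => θ - u) (𝓝[Icc 0 θ \ {θ}] θ) (𝓝[>] 0) := by
    refine tendsto_nhdsWithin_iff.2 ⟨?_, eventually_mem_nhdsWithin.mono fun u hu =>
      mem_Ioi.2 (sub_pos.2 (lt_of_le_of_ne hu.1.2 hu.2))⟩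
    simpa using ((tendsto_const_nhds (x := θ)).sub tendsto_id).mono_left
      (nhdsWithin_le_nhds (s := Icc 0 θ \ {θ}) (a := θ))
  have hcont : Tendsto (fun u => S u y) (𝓝[Icc 0 θ \ {θ}] θ) (𝓝 (S θ y)) :=
    (hS.2.2 y θ hθ).mono_left (nhdsWithin_mono _ (sdiff_subset.trans Icc_subset_Ici_self))
  refine (tendsto_apply_of_norm_le (eventually_mem_nhdsWithin.mono fun u hu => hbd u hu.1)
    hcont (hxy.comp hshift)).congr' ?_
  filter_upwards [self_mem_nhdsWithin] with u hu
  have hθ' : S θ x = S u (S (θ - u) x) := by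
    rw [← hS.apply_add hu.1.1 (sub_nonneg.2 hu.1.2), add_sub_cancel]
  simp only [Function.comp_def, slope_comm _ θ u, slope_def_module, hθ', map_smul, map_sub]

theorem hasDerivWithinAt_Ici (hS : IsC0Semigroup S) {K κ : ℝ}
    (hbd : ∀ τ, 0 ≤ τ → ‖S τ‖ ≤ K * Real.exp (κ * τ))
    (hxy : Tendsto (fun h : ℝ => h⁻¹ • (S h x - x)) (𝓝[>] 0) (𝓝 y)) (hθ : 0 ≤ θ) :
    HasDerivWithinAt (fun τ => S τ x) (S θ y) (Ici 0) θ := by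
  have hK : 0 ≤ K := by simpa using (norm_nonneg _).trans (hbd 0 le_rfl)
  have hbd' : ∀ τ ∈ Icc 0 θ, ‖S τ‖ ≤ K * Real.exp (|κ| * θ) := fun τ hτ =>
    (hbd τ hτ.1).trans (mul_exp_le_mul_exp_abs_mul hK hτ.1 hτ.2)
  rw [← Icc_union_Ioi_eq_Ici hθ]
  exact (hS.hasDerivWithinAt_Icc hbd' hxy hθ).union (hS.hasDerivWithinAt_Ioi hxy hθ)

theorem hasDerivWithinAt_const_sub (hS : IsC0Semigroup S) {K κ : ℝ}
    (hbd : ∀ τ, 0 ≤ τ → ‖S τ‖ ≤ K * Real.exp (κ * τ))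
    (hxy : Tendsto (fun h : ℝ => h⁻¹ • (S h x - x)) (𝓝[>] 0) (𝓝 y)) {c : ℝ} (hθ : θ ≤ c) :
    HasDerivWithinAt (fun σ => S (c - σ) x) (-S (c - θ) y) (Iic c) θ := by
  have hmaps : MapsTo (fun σ : ℝ => c - σ) (Iic c) (Ici 0) := fun σ (hσ : σ ≤ c) => sub_nonneg.2 hσ
  simpa [Function.comp_def] using (hS.hasDerivWithinAt_Ici hbd hxy (sub_nonneg.2 hθ)).scomp θ
    ((hasDerivAt_id θ).const_sub c).hasDerivWithinAt hmaps

variable {V : Type*} [NormedAddCommGroup V] [NormedSpace ℝ V] {ι : V →L[ℝ] E}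
  {SV : ℝ → V →L[ℝ] V} {Aop : V →L[ℝ] E}

theorem apply_generator (hS : IsC0Semigroup S)
    (hcompat : ∀ h : ℝ, 0 ≤ h → ∀ v : V, ι (SV h v) = S h (ι v))
    (hgen : ∀ v : V, Tendsto (fun h : ℝ => h⁻¹ • (S h (ι v) - ι v)) (𝓝[>] 0) (𝓝 (Aop v)))
    {τ : ℝ} (hτ : 0 ≤ τ) (w : V) :
    S τ (Aop w) = Aop (SV τ w) := by
  refine tendsto_nhds_unique ?_ (hgen (SV τ w))
  refine (((S τ).continuous.tendsto _).comp (hgen w)).congr' ?_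
  filter_upwards [self_mem_nhdsWithin] with h (hh : 0 < h)
  simp only [Function.comp_def, hcompat τ hτ, map_smul, map_sub, hS.apply_comm hτ hh.le]

theorem hasDerivWithinAt_restrict (hS : IsC0Semigroup S) {K κ : ℝ}
    (hbd : ∀ τ, 0 ≤ τ → ‖S τ‖ ≤ K * Real.exp (κ * τ))
    (hcompat : ∀ h : ℝ, 0 ≤ h → ∀ v : V, ι (SV h v) = S h (ι v))
    (hgen : ∀ v : V, Tendsto (fun h : ℝ => h⁻¹ • (S h (ι v) - ι v)) (𝓝[>] 0) (𝓝 (Aop v)))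
    (w : V) (hθ : 0 ≤ θ) :
    HasDerivWithinAt (fun σ => ι (SV σ w)) (Aop (SV θ w)) (Ici 0) θ := by
  rw [← hS.apply_generator hcompat hgen hθ]
  exact (hS.hasDerivWithinAt_Ici hbd (hgen w) hθ).congr (fun σ hσ => hcompat σ hσ w)
    (hcompat θ hθ w)

end IsC0Semigroup

section Propagation

variable {V E : Type*} [NormedAddCommGroup V] [NormedSpace ℝ V]
  [NormedAddCommGroup E] [NormedSpace ℝ E] {ι : V →L[ℝ] E}

/-- Variation of constants: `τ ↦ Φ τ (x τ)` changes at rate `Φ τ ((Aop - B τ) (x τ))`. -/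
theorem norm_propagate_sub_le {Φ : ℝ → E →L[ℝ] E} {B : ℝ → V →L[ℝ] E} {Aop : V →L[ℝ] E}
    {x : ℝ → V} {Δ C L : ℝ} (hΔ : 0 ≤ Δ)
    (hΦ : ∀ τ ∈ Icc 0 Δ,
      HasDerivWithinAt (fun σ => Φ σ (ι (x τ))) (-Φ τ (B τ (x τ))) (Icc 0 Δ) τ)
    (hΦcont : ∀ y, ContinuousOn (fun σ => Φ σ y) (Icc 0 Δ))
    (hΦbd : ∀ τ ∈ Icc 0 Δ, ‖Φ τ‖ ≤ C)
    (hx : ∀ τ ∈ Icc 0 Δ, HasDerivWithinAt (fun σ => ι (x σ)) (Aop (x τ)) (Icc 0 Δ) τ)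
    (hL : ∀ τ ∈ Icc 0 Δ, ‖Φ τ ((Aop - B τ) (x τ))‖ ≤ L) :
    ‖Φ Δ (ι (x Δ)) - Φ 0 (ι (x 0))‖ ≤ L * Δ := by
  have hder : ∀ τ ∈ Icc 0 Δ, HasDerivWithinAt (fun σ => Φ σ (ι (x σ)))
      (Φ τ ((Aop - B τ) (x τ))) (Icc 0 Δ) τ := by
    intro τ hτ
    convert (hΦ τ hτ).clm_apply_of_norm_le (hx τ hτ) hΦbd (hΦcont _ τ hτ) using 1
    simp only [sub_apply, map_sub]
    abel
  simpa [abs_of_nonneg hΔ] using (convex_Icc 0 Δ).norm_image_sub_le_of_norm_hasDerivWithin_le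
    hder hL (left_mem_Icc.2 hΔ) (right_mem_Icc.2 hΔ)

end Propagation

section Partition

variable {E : Type*} [NormedAddCommGroup E] [NormedSpace ℝ E]

def partitionProd (S : ℝ → ℝ → E →L[ℝ] E) (r : ℕ → ℝ) : ℕ → E →L[ℝ] E :=
  prodOps S r fun i => r (i + 1) - r i

theorem partitionProd_succ (S : ℝ → ℝ → E →L[ℝ] E) (r : ℕ → ℝ) (i : ℕ) (v : E) :
    partitionProd S r (i + 1) v = S (r i) (r (i + 1) - r i) (partitionProd S r i v) :=
  rfl

theorem IsStableFamily.norm_apply_partitionProd_le {S : ℝ → ℝ → E →L[ℝ] E} {M ω : ℝ}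
    (h : IsStableFamily S M ω) {r : ℕ → ℝ} (hr : ∀ i, 0 ≤ r i) (hmono : Monotone r)
    {i n : ℕ} (hi : i < n) {τ : ℝ} (hτ : τ ∈ Icc 0 (r (i + 1) - r i)) (v : E) :
    ‖S (r i) τ (partitionProd S r i v)‖ ≤ M * Real.exp (|ω| * r n) * ‖v‖ := by
  have hsum : ∑ j ∈ Finset.range i, (r (j + 1) - r j) + τ = r i - r 0 + τ := by
    rw [Finset.sum_range_sub]
  have hbd := h.norm_comp_prodOps_le hr hmono (fun j => sub_nonneg.2 (hmono j.le_succ)) i hτ.1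
  rw [hsum] at hbd
  have hlen : r i - r 0 + τ ≤ r n := by
    linarith [hτ.2, hr 0, hmono (Nat.succ_le_of_lt hi)]
  exact ((S (r i) τ).comp (partitionProd S r i)).le_of_opNorm_le_of_le (hbd.trans
    (mul_exp_le_mul_exp_abs_mul h.nonneg (by linarith [hτ.1, hmono (Nat.zero_le i)]) hlen)) le_rfl

end Partition

namespace IsHyperbolicFamily

variable {V E : Type*} [NormedAddCommGroup V] [NormedSpace ℝ V]
  [NormedAddCommGroup E] [NormedSpace ℝ E] {ι : V →L[ℝ] E} {A : ℝ → V →L[ℝ] E}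
  {S : ℝ → ℝ → E →L[ℝ] E} {SV : ℝ → ℝ → V →L[ℝ] V} {M ω MV ωV : ℝ}

theorem hasDerivWithinAt_frozen (hhyp : IsHyperbolicFamily ι A S SV M ω MV ωV) {a θ : ℝ}
    (ha : 0 ≤ a) (hθ : 0 ≤ θ) (w : V) :
    HasDerivWithinAt (fun σ => ι (SV a σ w)) (A a (SV a θ w)) (Ici 0) θ :=
  (hhyp.sem_E a ha).hasDerivWithinAt_restrict (fun _ hτ => hhyp.stable_E.norm_le ha hτ)
    (fun h hh => hhyp.compat a h ha hh) (hhyp.gen_on_V a ha) w hθ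

theorem norm_semigroup_step_le (hhyp : IsHyperbolicFamily ι A S SV M ω MV ωV)
    {Shat : ℝ → E →L[ℝ] E} (hShat : IsC0Semigroup Shat) {Ahat : V →L[ℝ] E}
    (hgen : ∀ v : V,
      Tendsto (fun h : ℝ => h⁻¹ • (Shat h (ι v) - ι v)) (𝓝[>] 0) (𝓝 (Ahat v)))
    {Mhat ωhat : ℝ} (hShatbd : ∀ τ : ℝ, 0 ≤ τ → ‖Shat τ‖ ≤ Mhat * Real.exp (ωhat * τ))
    {a b c B : ℝ} (ha : 0 ≤ a) (hab : a ≤ b) (hbc : b ≤ c) (w : V)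
    (hw : ∀ τ ∈ Icc 0 (b - a), ‖SV a τ w‖ ≤ B) :
    ‖Shat (c - b) (ι (SV a (b - a) w)) - Shat (c - a) (ι w)‖ ≤
      Mhat * Real.exp (|ωhat| * c) * (‖A a - Ahat‖ * B) * (b - a) := by
  have hMhat : 0 ≤ Mhat := by simpa using (norm_nonneg _).trans (hShatbd 0 le_rfl)
  have hmaps : MapsTo (fun σ => c - a - σ) (Icc 0 (b - a)) (Ici 0) := fun σ hσ => by
    simp only [mem_Ici]; linarith [hσ.2]
  have hbd : ∀ τ ∈ Icc 0 (b - a), ‖Shat (c - a - τ)‖ ≤ Mhat * Real.exp (|ωhat| * c) :=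
    fun τ hτ => (hShatbd _ (hmaps hτ)).trans
      (mul_exp_le_mul_exp_abs_mul hMhat (hmaps hτ) (by linarith [hτ.1]))
  have hderiv : ∀ τ ∈ Icc 0 (b - a), ∀ u : V, HasDerivWithinAt (fun σ => Shat (c - a - σ) (ι u))
      (-Shat (c - a - τ) (Ahat u)) (Icc 0 (b - a)) τ := fun τ hτ u =>
    (hShat.hasDerivWithinAt_const_sub hShatbd (hgen u) (by linarith [hτ.2])).mono
      fun σ hσ => (by linarith [hσ.2] : σ ≤ c - a)
  have key := norm_propagate_sub_le (B := fun _ => Ahat) (x := fun σ => SV a σ w)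
    (sub_nonneg.2 hab) (fun τ hτ => hderiv τ hτ _) (fun y => (hShat.2.2 y).comp (by fun_prop) hmaps)
    hbd (fun τ hτ => (hhyp.hasDerivWithinAt_frozen ha hτ.1 w).mono Icc_subset_Ici_self)
    fun τ hτ => (Shat _).le_of_opNorm_le_of_le (hbd τ hτ)
      ((A a - Ahat).le_of_opNorm_le_of_le le_rfl (hw τ hτ))
  simpa [(hhyp.sem_V a ha).1] using key

theorem norm_evolution_step_le (hhyp : IsHyperbolicFamily ι A S SV M ω MV ωV)
    {R : ℝ → ℝ → E →L[ℝ] E} (hdet : IsDeterminedEvolutionSystem ι A M ω R)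
    {a b T B ε : ℝ} (ha : 0 ≤ a) (hab : a ≤ b) (hbT : b ≤ T) (w : V)
    (hw : ∀ τ ∈ Icc 0 (b - a), ‖SV a τ w‖ ≤ B) (hA : ∀ ρ ∈ Icc a b, ‖A a - A ρ‖ ≤ ε) :
    ‖ι (SV a (b - a) w) - R b a (ι w)‖ ≤ M * Real.exp (|ω| * T) * (ε * B) * (b - a) := by
  obtain ⟨⟨hRid, -, hRcont⟩, hRbd, -, hRderiv⟩ := hdet
  have hmaps : MapsTo (fun σ => a + σ) (Icc 0 (b - a)) (Icc 0 b) := fun σ hσ =>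
    ⟨by linarith [hσ.1], by linarith [hσ.2]⟩
  have hbd : ∀ τ ∈ Icc 0 (b - a), ‖R b (a + τ)‖ ≤ M * Real.exp (|ω| * T) := fun τ hτ =>
    (hRbd _ _ (hmaps hτ).1 (hmaps hτ).2).trans (mul_exp_le_mul_exp_abs_mul
      hhyp.stable_E.nonneg (by linarith [hτ.2]) (by linarith [hτ.1]))
  have hderiv : ∀ τ ∈ Icc 0 (b - a), ∀ u : V, HasDerivWithinAt (fun σ => R b (a + σ) (ι u))
      (-R b (a + τ) (A (a + τ) u)) (Icc 0 (b - a)) τ := fun τ hτ u => by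
    simpa [Function.comp_def] using (hRderiv b u _ (hmaps hτ)).scomp τ
      ((hasDerivAt_id τ).const_add a).hasDerivWithinAt hmaps
  have hcont : ∀ y, ContinuousOn (fun σ => R b (a + σ) y) (Icc 0 (b - a)) := fun y =>
    (hRcont y).comp (f := fun σ => (b, a + σ)) (by fun_prop) fun σ hσ =>
      ⟨(hmaps hσ).1, (hmaps hσ).2⟩
  have key := norm_propagate_sub_le (B := fun σ => A (a + σ)) (x := fun σ => SV a σ w)
    (sub_nonneg.2 hab) (fun τ hτ => hderiv τ hτ _) hcont hbd
    (fun τ hτ => (hhyp.hasDerivWithinAt_frozen ha hτ.1 w).mono Icc_subset_Ici_self)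
    fun τ hτ => (R _ _).le_of_opNorm_le_of_le (hbd τ hτ) ((A a - A (a + τ)).le_of_opNorm_le_of_le
      (hA _ ⟨by linarith [hτ.1], by linarith [hτ.2]⟩) (hw τ hτ))
  simpa [(hhyp.sem_V a ha).1, hRid b (ha.trans hab)] using key

theorem norm_semigroup_sub_partitionProd_le (hhyp : IsHyperbolicFamily ι A S SV M ω MV ωV)
    {Shat : ℝ → E →L[ℝ] E} (hShat : IsC0Semigroup Shat) {Ahat : V →L[ℝ] E}
    (hgen : ∀ v : V,
      Tendsto (fun h : ℝ => h⁻¹ • (Shat h (ι v) - ι v)) (𝓝[>] 0) (𝓝 (Ahat v)))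
    {Mhat ωhat : ℝ} (hShatbd : ∀ τ : ℝ, 0 ≤ τ → ‖Shat τ‖ ≤ Mhat * Real.exp (ωhat * τ))
    {r : ℕ → ℝ} (hr : ∀ i, 0 ≤ r i) (hmono : Monotone r) (n : ℕ) (v : V) :
    ‖Shat (r n - r 0) (ι v) - ι (partitionProd SV r n v)‖ ≤
      Mhat * MV * Real.exp ((|ωhat| + |ωV|) * r n) * ‖v‖ *
        ∑ i ∈ Finset.range n, ‖A (r i) - Ahat‖ * (r (i + 1) - r i) := by
  set f : ℕ → E := fun i => Shat (r n - r i) (ι (partitionProd SV r i v))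
  have hfn : f n = ι (partitionProd SV r n v) := by simp [f, hShat.1]
  have hstep : ∀ i ∈ Finset.range n, dist (f i) (f (i + 1)) ≤
      Mhat * MV * Real.exp ((|ωhat| + |ωV|) * r n) * ‖v‖ *
        (‖A (r i) - Ahat‖ * (r (i + 1) - r i)) := by
    intro i hi
    have hi := Finset.mem_range.1 hi
    rw [dist_comm, dist_eq_norm]
    refine (hhyp.norm_semigroup_step_le hShat hgen hShatbd (hr i) (hmono i.le_succ) (hmono hi) _
      fun τ hτ => hhyp.stable_V.norm_apply_partitionProd_le hr hmono hi hτ v).trans_eq ?_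
    rw [add_mul, Real.exp_add]
    ring
  calc ‖Shat (r n - r 0) (ι v) - ι (partitionProd SV r n v)‖ = dist (f 0) (f n) := by
        rw [hfn, dist_eq_norm]; rfl
    _ ≤ _ := (dist_le_range_sum_dist f n).trans (Finset.sum_le_sum hstep)
    _ = _ := (Finset.mul_sum _ _ _).symm

theorem norm_partitionProd_sub_evolution_le (hhyp : IsHyperbolicFamily ι A S SV M ω MV ωV)
    {R : ℝ → ℝ → E →L[ℝ] E} (hdet : IsDeterminedEvolutionSystem ι A M ω R)
    {r : ℕ → ℝ} (hr : ∀ i, 0 ≤ r i) (hmono : Monotone r) {n : ℕ} {ε : ℝ}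
    (hA : ∀ i < n, ∀ ρ ∈ Icc (r i) (r (i + 1)), ‖A (r i) - A ρ‖ ≤ ε) (v : V) :
    ‖ι (partitionProd SV r n v) - R (r n) (r 0) (ι v)‖ ≤
      (M * Real.exp (|ω| * r n)) ^ 2 * (MV * Real.exp (|ωV| * r n) * ‖v‖) * ε * (r n - r 0) := by
  set f : ℕ → E := fun i => R (r n) (r i) (ι (partitionProd SV r i v))
  have hfn : f n = ι (partitionProd SV r n v) := by simp [f, hdet.1.1 _ (hr n)]
  have hstep : ∀ i ∈ Finset.range n, dist (f i) (f (i + 1)) ≤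
      (M * Real.exp (|ω| * r n)) ^ 2 * (MV * Real.exp (|ωV| * r n) * ‖v‖) * ε *
        (r (i + 1) - r i) := by
    intro i hi
    have hi := Finset.mem_range.1 hi
    have hsplit : f i - f (i + 1) = R (r n) (r (i + 1))
        (R (r (i + 1)) (r i) (ι (partitionProd SV r i v)) - ι (partitionProd SV r (i + 1) v)) := by
      rw [map_sub, ← ContinuousLinearMap.comp_apply,
        hdet.1.2.1 _ _ _ (hr i) (hmono i.le_succ) (hmono hi)]
    rw [dist_eq_norm, hsplit, ← norm_neg, ← map_neg, neg_sub, partitionProd_succ]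
    refine ((R _ _).le_of_opNorm_le_of_le ((hdet.2.1 _ _ (hr _) (hmono hi)).trans
      (mul_exp_le_mul_exp_abs_mul hhyp.stable_E.nonneg (sub_nonneg.2 (hmono hi))
        (by linarith [hr (i + 1)])))
      (hhyp.norm_evolution_step_le hdet (hr i) (hmono i.le_succ) (hmono hi) _
        (fun τ hτ => hhyp.stable_V.norm_apply_partitionProd_le hr hmono hi hτ v)
        (hA i hi))).trans_eq ?_
    ring
  calc ‖ι (partitionProd SV r n v) - R (r n) (r 0) (ι v)‖ = dist (f 0) (f n) := by
        rw [hfn, dist_comm, dist_eq_norm]; rfl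
    _ ≤ _ := (dist_le_range_sum_dist f n).trans (Finset.sum_le_sum hstep)
    _ = _ := by rw [← Finset.mul_sum, Finset.sum_range_sub]

end IsHyperbolicFamily

theorem semigroup_vs_evolution_system_estimate_general
    {V E : Type*} [NormedAddCommGroup V] [NormedSpace ℝ V]
    [NormedAddCommGroup E] [NormedSpace ℝ E]
    (iota : V →L[ℝ] E)
    (A : ℝ → (V →L[ℝ] E)) (S : ℝ → ℝ → E →L[ℝ] E) (SV : ℝ → ℝ → V →L[ℝ] V)
    (M om MV omV : ℝ)
    (hhyp : IsHyperbolicFamily iota A S SV M om MV omV)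
    (R : ℝ → ℝ → E →L[ℝ] E)
    (hdet : IsDeterminedEvolutionSystem iota A M om R)
    -- the C₀ semigroup Ŝ with generator Â, V being Â-admissible and V ⊆ D(Â),
    -- `Ahat` being the restriction of Â to V
    (Shat : ℝ → E →L[ℝ] E) (hShat : IsC0Semigroup Shat)
    (Ahat : V →L[ℝ] E)
    (hgen : ∀ v : V,
      Tendsto (fun h : ℝ => h⁻¹ • (Shat h (iota v) - iota v)) (𝓝[>] 0) (𝓝 (Ahat v)))
    (Mhat omhat : ℝ)
    (hShatbd : ∀ τ : ℝ, 0 ≤ τ → ‖Shat τ‖ ≤ Mhat * Real.exp (omhat * τ)) :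
    ∀ (v : V) (t s : ℝ), 0 ≤ s → s ≤ t →
      ‖Shat (t - s) (iota v) - R t s (iota v)‖ ≤
        Mhat * MV * Real.exp ((|omhat| + |omV|) * t) * ‖v‖ *
          ∫ r in s..t, ‖A r - Ahat‖ := by
  intro v t s hs hst
  have hAcont : ContinuousOn A (Icc s t) := hhyp.contA.mono fun ρ hρ => hs.trans hρ.1
  have hC : 0 ≤ Mhat * MV * Real.exp ((|omhat| + |omV|) * t) * ‖v‖ := by
    have hMhat : 0 ≤ Mhat := by simpa using (norm_nonneg _).trans (hShatbd 0 le_rfl)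
    have := hhyp.stable_V.nonneg
    positivity
  refine le_of_forall_pos_le_add_mul (c := (Mhat * MV * Real.exp ((|omhat| + |omV|) * t) * ‖v‖ +
    (M * Real.exp (|om| * t)) ^ 2 * (MV * Real.exp (|omV| * t) * ‖v‖)) * (t - s)) fun ε hε => ?_
  obtain ⟨n, r, hmono, rfl, rfl, hA⟩ := exists_partition_norm_sub_le hst hAcont hε
  have hr : ∀ i, 0 ≤ r i := fun i => hs.trans (hmono (Nat.zero_le i))
  have hriemann := sum_mul_sub_le_integral_add (g := fun ρ => ‖A ρ - Ahat‖) (ε := ε) hmono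
    ((hAcont.sub continuousOn_const).norm.intervalIntegrable_of_Icc hst) fun i hi ρ hρ => by
      linarith [norm_sub_le_norm_sub_add_norm_sub (A (r i)) (A ρ) Ahat, hA i hi ρ hρ]
  calc ‖Shat (r n - r 0) (iota v) - R (r n) (r 0) (iota v)‖
      ≤ ‖Shat (r n - r 0) (iota v) - iota (partitionProd SV r n v)‖ +
          ‖iota (partitionProd SV r n v) - R (r n) (r 0) (iota v)‖ :=
        norm_sub_le_norm_sub_add_norm_sub _ _ _
    _ ≤ _ := add_le_add (hhyp.norm_semigroup_sub_partitionProd_le hShat hgen hShatbd hr hmono n v)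
        (hhyp.norm_partitionProd_sub_evolution_le hdet hr hmono hA v)
    _ ≤ _ := add_le_add_left (mul_le_mul_of_nonneg_left hriemann hC) _
    _ = _ := by ring

/-- The key estimate in the proof of Theorem 3.4: comparing the evolution system determined
by a hyperbolic family `{A(t)}` with the semigroup `Ŝ` generated by `Â`,
`‖Ŝ(t−s)v − R(t,s)v‖ ≤ M̂ M_V e^{(|ω̂|+|ω_V|)t} ‖v‖_V ∫ₛᵗ ‖A(r) − Â‖_{L(V,E)} dr`. -/
theorem semigroup_vs_evolution_system_estimate
    {V E : Type*} [NormedAddCommGroup V] [NormedSpace ℝ V] [CompleteSpace V]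
    [NormedAddCommGroup E] [NormedSpace ℝ E] [CompleteSpace E]
    (iota : V →L[ℝ] E) (hinj : Function.Injective iota) (hdense : DenseRange iota)
    (A : ℝ → (V →L[ℝ] E)) (S : ℝ → ℝ → E →L[ℝ] E) (SV : ℝ → ℝ → V →L[ℝ] V)
    (M om MV omV : ℝ) (hM : 1 ≤ M) (hMV : 1 ≤ MV)
    (hhyp : IsHyperbolicFamily iota A S SV M om MV omV)
    (R : ℝ → ℝ → E →L[ℝ] E)
    (hdet : IsDeterminedEvolutionSystem iota A M om R)
    -- the C₀ semigroup Ŝ with generator Â, V being Â-admissible and V ⊆ D(Â),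
    -- `Ahat` being the restriction of Â to V
    (Shat : ℝ → E →L[ℝ] E) (hShat : IsC0Semigroup Shat)
    (SVhat : ℝ → V →L[ℝ] V) (hSVhat : IsC0Semigroup SVhat)
    (hcompat : ∀ h : ℝ, 0 ≤ h → ∀ v : V, iota (SVhat h v) = Shat h (iota v))
    (Ahat : V →L[ℝ] E)
    (hgen : ∀ v : V,
      Tendsto (fun h : ℝ => h⁻¹ • (Shat h (iota v) - iota v)) (𝓝[>] 0) (𝓝 (Ahat v)))
    (Mhat omhat : ℝ)
    (hShatbd : ∀ τ : ℝ, 0 ≤ τ → ‖Shat τ‖ ≤ Mhat * Real.exp (omhat * τ)) :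
    ∀ (v : V) (t s : ℝ), 0 ≤ s → s ≤ t →
      ‖Shat (t - s) (iota v) - R t s (iota v)‖ ≤
        Mhat * MV * Real.exp ((|omhat| + |omV|) * t) * ‖v‖ *
          ∫ r in s..t, ‖A r - Ahat‖ :=
  semigroup_vs_evolution_system_estimate_general iota A S SV M om MV omV hhyp R hdet Shat hShat Ahat
    hgen Mhat omhat hShatbd
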